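/- Suppose there exists δ > 0 such that p_i > δ for all i ≥ 1. Then there exists a real number R > 1 such that E = ∩_{n=0}^{∞} q_{F_n}^{-1}(closed disk of center 0 and radius R), and also E = ∩_{n=0}^{∞} q_{F_n}^{-1}(open disk of center 0 and radius R). -/

import Mathlib

/-- `rr p n = r_n = p (⌊(n+1)/2⌋ + 1)`. -/
noncomputable def rr (p : ℕ → ℝ) (n : ℕ) : ℝ := p ((n+1)/2 + 1)

/-- `qF p z n = q_{F_n}(z)`. -/
noncomputable def qF (p : ℕ → ℝ) (z : ℂ) : ℕ → ℂ
  | 0 => (z - (1 - (p 1 : ℂ))) / (p 1 : ℂ)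
  | 1 => (1 / (p 2 : ℂ)) * (qF p z 0) ^ 2 - (1 / (p 2 : ℂ) - 1)
  | (n+2) => (1 / (rr p (n+2) : ℂ)) * qF p z (n+1) * qF p z n - (1 / (rr p (n+2) : ℂ) - 1)

/-- The fibered filled Julia set `E = {z : (q_{F_n}(z))ₙ is bounded}`. -/
def Eset (p : ℕ → ℝ) : Set ℂ := {z : ℂ | ∃ C : ℝ, ∀ n : ℕ, ‖qF p z n‖ ≤ C}

/-!
The norms `xₙ = ‖q_{F_n}(z)‖` satisfy `xₙ₊₁ xₙ - K ≤ xₙ₊₂ ≤ K (xₙ₊₁ xₙ + 1)` with `K = 1/δ`.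
Once two consecutive terms are at least `K + 2`, the lower bound makes the sequence at least
double at each step, so it tends to infinity. A term `xₘ ≥ T = K (2K + 3)` followed by a
term `xₘ₊₁ ≤ K + 2` is impossible: the lower bound forces `xₘ₋₁` to be tiny, and then the upper
bound forces `xₘ₋₂ ≥ T`, with `xₘ₋₁ ≤ K + 2` again, so this pattern would descend to the start
of the sequence, where it cannot occur because `q_{F_1}` is built from `q_{F_0}²`. Hence a
single term of size at least `T` already makes the sequence escape, and both the closed and the
open disk of radius `T` cut out `E`.
-/

namespace ProductRecurrence

variable {K : ℝ} {x : ℕ → ℝ}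

lemma large_small_of_large_small_add_two (hK : 1 ≤ K) {a b c d : ℝ} (ha : 0 ≤ a) (hb : 0 ≤ b)
    (hlow : c * b - K ≤ d) (hup : c ≤ K * (b * a + 1))
    (hc : K * (2 * K + 3) ≤ c) (hd : d ≤ K + 2) :
    K * (2 * K + 3) ≤ a ∧ b ≤ K + 2 := by
  have hbc : K * (2 * K + 3) * b ≤ 2 * K + 2 := by nlinarith
  have hba : 2 * K + 2 ≤ b * a := by nlinarith
  have hT : 2 * K + 2 ≤ K * (2 * K + 3) := by nlinarith
  have hb1 : b ≤ 1 := by nlinarith [mul_le_mul_of_nonneg_right hT hb]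
  constructor <;> nlinarith

lemma two_mul_le_of_le_of_le (hK : 0 ≤ K) {a b c : ℝ} (ha : K + 2 ≤ a) (hb : K + 2 ≤ b)
    (hlow : b * a - K ≤ c) : 2 * b ≤ c := by
  nlinarith

lemma add_two_lt_succ_of_le (hK : 1 ≤ K) (hx : ∀ n, 0 ≤ x n) (h01 : x 1 = x 0)
    (hlow : ∀ n, x (n + 1) * x n - K ≤ x (n + 2))
    (hup : ∀ n, x (n + 2) ≤ K * (x (n + 1) * x n + 1)) (m : ℕ) (hm : K * (2 * K + 3) ≤ x m) :
    K + 2 < x (m + 1) := by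
  induction m using Nat.twoStepInduction with
  | zero => nlinarith
  | one =>
    have h2 : x 1 * x 0 - K ≤ x 2 := hlow 0
    rw [h01] at hm h2
    show K + 2 < x 2
    have hx1 : 1 ≤ x 0 := by nlinarith
    nlinarith [mul_le_mul_of_nonneg_left hx1 (hx 0)]
  | more m ih _ =>
    by_contra! hsmall
    obtain ⟨hbig, hsmall'⟩ :=
      large_small_of_large_small_add_two hK (hx m) (hx (m + 1)) (hlow (m + 1)) (hup m) hm hsmall
    exact (ih hbig).not_ge hsmall'

lemma tendsto_atTop_of_le_of_le (hK : 0 ≤ K) (hlow : ∀ n, x (n + 1) * x n - K ≤ x (n + 2))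
    {m : ℕ} (hm : K + 2 ≤ x m) (hm' : K + 2 ≤ x (m + 1)) : Filter.Tendsto x .atTop .atTop := by
  have hlarge : ∀ k, K + 2 ≤ x (m + k) ∧ K + 2 ≤ x (m + k + 1) := by
    intro k
    induction k with
    | zero => exact ⟨hm, hm'⟩
    | succ k ih =>
      have := two_mul_le_of_le_of_le hK ih.1 ih.2 (hlow (m + k))
      exact ⟨ih.2, show K + 2 ≤ x (m + k + 2) by linarith⟩
  rw [← Filter.tendsto_add_atTop_iff_nat (m + 1)]
  refine tendsto_atTop_of_geom_le (c := 2) (by rw [zero_add]; linarith) one_lt_two fun k => ?_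
  rw [show k + (m + 1) = m + k + 1 by ring, show k + 1 + (m + 1) = m + k + 2 by ring]
  exact two_mul_le_of_le_of_le hK (hlarge k).1 (hlarge k).2 (hlow (m + k))

lemma tendsto_atTop_of_le (hK : 1 ≤ K) (hx : ∀ n, 0 ≤ x n) (h01 : x 1 = x 0)
    (hlow : ∀ n, x (n + 1) * x n - K ≤ x (n + 2))
    (hup : ∀ n, x (n + 2) ≤ K * (x (n + 1) * x n + 1)) {m : ℕ} (hm : K * (2 * K + 3) ≤ x m) :
    Filter.Tendsto x .atTop .atTop :=
  tendsto_atTop_of_le_of_le (by linarith) hlow (by nlinarith)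
    (add_two_lt_succ_of_le hK hx h01 hlow hup m hm).le

end ProductRecurrence

lemma norm_mul_mul_sub_bounds {c : ℝ} (hc : 1 ≤ c) (a b : ℂ) :
    ‖a‖ * ‖b‖ - c ≤ ‖c * a * b - (c - 1)‖ ∧ ‖c * a * b - (c - 1)‖ ≤ c * (‖a‖ * ‖b‖ + 1) := by
  have hab : ‖(c : ℂ) * a * b‖ = c * (‖a‖ * ‖b‖) := by
    rw [mul_assoc, norm_mul, norm_mul, Complex.norm_real, Real.norm_of_nonneg (by linarith)]
  have hc1 : ‖(c : ℂ) - 1‖ = c - 1 := by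
    rw [← Complex.ofReal_one, ← Complex.ofReal_sub, Complex.norm_real,
      Real.norm_of_nonneg (by linarith)]
  have hlow := norm_sub_norm_le ((c : ℂ) * a * b) (c - 1)
  have hup := norm_sub_le ((c : ℂ) * a * b) (c - 1)
  rw [hab, hc1] at hlow hup
  have hX : 0 ≤ ‖a‖ * ‖b‖ := by positivity
  constructor <;> nlinarith

lemma qF_succ (p : ℕ → ℝ) (z : ℂ) (n : ℕ) :
    qF p z (n + 1) = 1 / (rr p (n + 1) : ℂ) * qF p z n * qF p z (n - 1)
      - (1 / (rr p (n + 1) : ℂ) - 1) := by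
  cases n with
  | zero =>
    show qF p z 1 = 1 / (p 2 : ℂ) * qF p z 0 * qF p z 0 - (1 / (p 2 : ℂ) - 1)
    rw [qF.eq_2, sq, mul_assoc]
  | succ n => rfl

lemma norm_qF_succ_bounds (p : ℕ → ℝ) (hp : ∀ i, 1 ≤ i → 0 < p i ∧ p i ≤ 1)
    (δ : ℝ) (hδ : 0 < δ) (hpδ : ∀ i, 1 ≤ i → δ < p i) (z : ℂ) (n : ℕ) :
    ‖qF p z n‖ * ‖qF p z (n - 1)‖ - 1 / δ ≤ ‖qF p z (n + 1)‖ ∧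
      ‖qF p z (n + 1)‖ ≤ 1 / δ * (‖qF p z n‖ * ‖qF p z (n - 1)‖ + 1) := by
  have hi : 1 ≤ (n + 1 + 1) / 2 + 1 := Nat.le_add_left 1 _
  have hr : 0 < rr p (n + 1) := (hp _ hi).1
  have hc : 1 ≤ 1 / rr p (n + 1) := by rw [le_div_iff₀ hr, one_mul]; exact (hp _ hi).2
  have hcδ : 1 / rr p (n + 1) ≤ 1 / δ := one_div_le_one_div_of_le hδ (hpδ _ hi).le
  obtain ⟨hlow, hup⟩ := norm_mul_mul_sub_bounds hc (qF p z n) (qF p z (n - 1))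
  push_cast at hlow hup
  rw [← qF_succ] at hlow hup
  have hX : 0 ≤ ‖qF p z n‖ * ‖qF p z (n - 1)‖ := by positivity
  constructor
  · linarith
  · nlinarith

lemma norm_qF_lt_of_mem_Eset (p : ℕ → ℝ) (hp : ∀ i, 1 ≤ i → 0 < p i ∧ p i ≤ 1)
    (δ : ℝ) (hδ : 0 < δ) (hpδ : ∀ i, 1 ≤ i → δ < p i) {z : ℂ} (hz : z ∈ Eset p) (n : ℕ) :
    ‖qF p z n‖ < 1 / δ * (2 * (1 / δ) + 3) := by
  obtain ⟨C, hC⟩ := hz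
  by_contra! hn
  have hK : 1 ≤ 1 / δ := one_le_one_div hδ ((hpδ 1 le_rfl).le.trans (hp 1 le_rfl).2)
  -- `k - 1` truncates, so this is `‖q₀‖, ‖q₀‖, ‖q₁‖, …` and the step `q₀ ↦ q₁` fits the recurrence.
  have hesc : Filter.Tendsto (fun k => ‖qF p z (k - 1)‖) .atTop .atTop :=
    ProductRecurrence.tendsto_atTop_of_le hK (fun _ => norm_nonneg _) rfl
      (fun k => (norm_qF_succ_bounds p hp δ hδ hpδ z k).1)
      (fun k => (norm_qF_succ_bounds p hp δ hδ hpδ z k).2) (m := n + 1) hn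
  obtain ⟨k, hk⟩ := (hesc.eventually_gt_atTop C).exists
  exact (hC _).not_gt hk

/-- Suppose `p i > δ > 0` for all `i ≥ 1`.  Then there is `R > 1`
with `E = ⋂ₙ q_{F_n}⁻¹(closedBall 0 R)` and also `E = ⋂ₙ q_{F_n}⁻¹(ball 0 R)`. -/
theorem stmt14 (p : ℕ → ℝ) (hp : ∀ i, 1 ≤ i → 0 < p i ∧ p i ≤ 1)
    (δ : ℝ) (hδ : 0 < δ) (hpδ : ∀ i, 1 ≤ i → δ < p i) :
    ∃ R : ℝ, 1 < R ∧
      Eset p = ⋂ n : ℕ, (fun z : ℂ => qF p z n) ⁻¹' Metric.closedBall 0 R ∧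
      Eset p = ⋂ n : ℕ, (fun z : ℂ => qF p z n) ⁻¹' Metric.ball 0 R := by
  have hK : 1 ≤ 1 / δ := one_le_one_div hδ ((hpδ 1 le_rfl).le.trans (hp 1 le_rfl).2)
  refine ⟨1 / δ * (2 * (1 / δ) + 3), by nlinarith, ?_, ?_⟩ <;> ext z <;>
    simp only [Set.mem_iInter, Set.mem_preimage, mem_closedBall_zero_iff, mem_ball_zero_iff]
  · exact ⟨fun hz n => (norm_qF_lt_of_mem_Eset p hp δ hδ hpδ hz n).le, fun h => ⟨_, h⟩⟩
  · exact ⟨norm_qF_lt_of_mem_Eset p hp δ hδ hpδ, fun h => ⟨_, fun n => (h n).le⟩⟩
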